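/- arXiv:2409.18906 — 9 statements merged into one kernel-verified Lean document; each statement's English description precedes it below -/
import Mathlib

section
/- Let a and b be distinct positive integers. There exists a complex number α with α^(b-a) = 1 and α^a + 1 = 0 if and only if the 2-adic valuations of a and b are equal. -/
/-!
Write `a = m g` and `b = n g` with `m`, `n` coprime. Since coprime `m`, `n` are not both even,
`ν₂(a) = ν₂(b)` means that `m` and `n` are both odd. If `α ^ a = α ^ b = -1`, then `β = α ^ g`
gives `(-1) ^ m = β ^ (m n) = (-1) ^ n`, so `m` and `n` have the same parity and are therefore odd.
Conversely, when `m` and `n` are odd, any `g`-th root of `-1` is also an `a`-th and a `b`-th root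
of `-1`.
-/

theorem padicValNat_two_eq_zero_iff_odd {n : ℕ} (hn : n ≠ 0) : padicValNat 2 n = 0 ↔ Odd n := by
  simp [padicValNat.eq_zero_iff, hn, Nat.odd_iff]

theorem Nat.Coprime.padicValNat_two_eq_iff_odd {m n : ℕ} (hm : m ≠ 0) (hn : n ≠ 0)
    (hmn : m.Coprime n) : padicValNat 2 m = padicValNat 2 n ↔ Odd m ∧ Odd n := by
  rw [← padicValNat_two_eq_zero_iff_odd hm, ← padicValNat_two_eq_zero_iff_odd hn]
  refine ⟨fun h => ?_, fun ⟨hm0, hn0⟩ => hm0.trans hn0.symm⟩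
  by_contra hne
  have hpos : 1 ≤ padicValNat 2 n := by omega
  exact Nat.not_coprime_of_dvd_of_dvd one_lt_two
    (dvd_of_one_le_padicValNat (h ▸ hpos)) (dvd_of_one_le_padicValNat hpos) hmn

section NegOneRoots

variable {M : Type*} [Monoid M] [HasDistribNeg M]

theorem Nat.Coprime.odd_and_odd_of_pow_eq_neg_one (hM : (-1 : M) ≠ 1) {y : M} {m n : ℕ}
    (hmn : m.Coprime n) (hm : y ^ m = -1) (hn : y ^ n = -1) : Odd m ∧ Odd n := by
  have hpar : (-1 : M) ^ m = (-1) ^ n :=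
    calc (-1 : M) ^ m = (y ^ n) ^ m := by rw [hn]
      _ = (y ^ m) ^ n := by rw [← pow_mul, ← pow_mul, mul_comm]
      _ = (-1) ^ n := by rw [hm]
  have heven : Even m ↔ Even n := by
    rw [← neg_one_pow_eq_one_iff_even hM, ← neg_one_pow_eq_one_iff_even hM, hpar]
  have hm_odd : Odd m := Nat.not_even_iff_odd.mp fun hme =>
    Nat.not_coprime_of_dvd_of_dvd one_lt_two hme.two_dvd (heven.mp hme).two_dvd hmn
  exact ⟨hm_odd, Nat.not_even_iff_odd.mp (heven.not.mp (Nat.not_even_iff_odd.mpr hm_odd))⟩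

theorem pow_mul_eq_neg_one_of_odd {x : M} {g m : ℕ} (hx : x ^ g = -1) (hm : Odd m) :
    x ^ (m * g) = -1 := by
  rw [mul_comm, pow_mul, hx, hm.neg_one_pow]

end NegOneRoots

theorem zpow_natCast_sub_natCast_eq_one_iff {G₀ : Type*} [GroupWithZero G₀] {x : G₀} (hx : x ≠ 0)
    (a b : ℕ) : x ^ ((b : ℤ) - (a : ℤ)) = 1 ↔ x ^ b = x ^ a := by
  rw [zpow_sub₀ hx, div_eq_one_iff_eq (zpow_ne_zero _ hx), zpow_natCast, zpow_natCast]

theorem stmt_0_general (a b : ℕ) (ha : 0 < a) (hb : 0 < b) :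
    (∃ α : ℂ, α ^ ((b : ℤ) - (a : ℤ)) = 1 ∧ α ^ a + 1 = 0) ↔
      padicValNat 2 a = padicValNat 2 b := by
  have hroots : (∃ α : ℂ, α ^ ((b : ℤ) - (a : ℤ)) = 1 ∧ α ^ a + 1 = 0) ↔
      ∃ α : ℂ, α ^ a = -1 ∧ α ^ b = -1 := by
    refine exists_congr fun α => ⟨fun ⟨hba, ha1⟩ => ?_, fun ⟨ha1, hb1⟩ => ?_⟩ <;>
      have hα : α ≠ 0 := by rintro rfl; simp_all [zero_pow ha.ne']
    · rw [zpow_natCast_sub_natCast_eq_one_iff hα] at hba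
      have ha1 : α ^ a = -1 := eq_neg_of_add_eq_zero_left ha1
      exact ⟨ha1, hba.trans ha1⟩
    · rw [zpow_natCast_sub_natCast_eq_one_iff hα, ha1, hb1]
      exact ⟨rfl, neg_add_cancel 1⟩
  obtain ⟨g, m, n, hg, hmn, rfl, rfl⟩ := Nat.exists_coprime' (Nat.gcd_pos_of_pos_left b ha)
  have hm : m ≠ 0 := by rintro rfl; simp at ha
  have hn : n ≠ 0 := by rintro rfl; simp at hb
  rw [hroots, padicValNat.mul hm hg.ne', padicValNat.mul hn hg.ne', add_left_inj,
    hmn.padicValNat_two_eq_iff_odd hm hn]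
  constructor
  · rintro ⟨α, hαm, hαn⟩
    rw [mul_comm, pow_mul] at hαm hαn
    exact hmn.odd_and_odd_of_pow_eq_neg_one (by norm_num) hαm hαn
  · rintro ⟨hmo, hno⟩
    obtain ⟨α, hα⟩ := IsAlgClosed.exists_pow_nat_eq (-1 : ℂ) hg
    exact ⟨α, pow_mul_eq_neg_one_of_odd hα hmo, pow_mul_eq_neg_one_of_odd hα hno⟩

theorem stmt_0 (a b : ℕ) (ha : 0 < a) (hb : 0 < b) (hab : a ≠ b) :
    (∃ α : ℂ, α ^ ((b : ℤ) - (a : ℤ)) = 1 ∧ α ^ a + 1 = 0) ↔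
      padicValNat 2 a = padicValNat 2 b :=
  stmt_0_general a b ha hb
end

section
/- Let a and b be distinct positive integers. There exist complex numbers α and β with α^(b-a) = 1 = β^(b-a) and α^a + β^a + 1 = 0 if and only if ν_3(a) = ν_3(b) < ν_3(b-a). -/
/-!
Put `n = |b - a|`. Roots of unity have norm one, and if `‖x‖ = ‖y‖ = 1` with `x + y + 1 = 0`, then
conjugating gives `x⁻¹ + y⁻¹ + 1 = 0`, whence `xy = 1` and `x² + x + 1 = 0`: so `α ^ a` is a
primitive cube root of unity, and conversely `α, α²` work as soon as `α ^ a` is one. A primitive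
`p`-th root of unity is the `a`-th power of an `n`-th root of unity iff `ν_p(a) < ν_p(n)`.
Finally, `ν₃(a) < ν₃(b - a)` already forces `ν₃(b) = ν₃(a)` by the ultrametric inequality.
-/

theorem padicValInt_eq_and_lt_sub_iff {p : ℕ} [Fact p.Prime] {a b : ℤ} (ha : a ≠ 0) :
    padicValInt p a = padicValInt p b ∧ padicValInt p b < padicValInt p (b - a) ↔
      padicValInt p a < padicValInt p (b - a) := by
  refine ⟨fun ⟨heq, hlt⟩ ↦ heq ▸ hlt, fun h ↦ ?_⟩
  have hba : b - a ≠ 0 := by rintro hba; simp [hba] at h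
  have hb : b ≠ 0 := by rintro rfl; simp [padicValInt] at h
  have hval : padicValRat p ((a : ℚ) + (b - a : ℤ)) = padicValRat p a := by
    refine padicValRat.add_eq_of_lt ?_ (by exact_mod_cast ha) (by exact_mod_cast hba) ?_
    · simpa using hb
    · simpa only [padicValRat.of_int, Nat.cast_lt] using h
  have hb' : padicValInt p b = padicValInt p a := by
    simpa [padicValRat.of_int] using hval
  exact ⟨hb'.symm, hb' ▸ h⟩

theorem pow_natAbs_eq_one' {M : Type*} [DivisionMonoid M] (a : M) (n : ℤ) :
    a ^ n.natAbs = 1 ↔ a ^ n = 1 := by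
  cases n <;> simp

theorem IsPrimitiveRoot.padicValNat_lt {M : Type*} [CommMonoid M] {p : ℕ} [Fact p.Prime] {α : M}
    {a n : ℕ} (hn : n ≠ 0) (hα : α ^ n = 1) (h : IsPrimitiveRoot (α ^ a) p) :
    padicValNat p a < padicValNat p n := by
  by_contra! hle
  obtain ⟨m, hm⟩ : p ^ padicValNat p n ∣ n := pow_padicValNat_dvd
  obtain ⟨c, hc⟩ : p ^ padicValNat p n ∣ a := (padicValNat_dvd_iff _ a).2 (Or.inr hle)
  have hpm : p ∣ m := h.dvd_of_pow_eq_one m <| by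
    rw [← pow_mul, hc, mul_right_comm, ← hm, pow_mul, hα, one_pow]
  exact pow_succ_padicValNat_not_dvd hn <| hm ▸ (pow_succ p _ ▸ mul_dvd_mul_left _ hpm)

namespace Complex

theorem isPrimitiveRoot_three_of_add_add_one_eq_zero {x y : ℂ} (hx : ‖x‖ = 1) (hy : ‖y‖ = 1)
    (h : x + y + 1 = 0) : IsPrimitiveRoot x 3 := by
  have hxy : x * y = 1 := by
    have hconj : starRingEnd ℂ x + starRingEnd ℂ y + 1 = 0 := by
      simpa using congrArg (starRingEnd ℂ) h
    have hx' : x * starRingEnd ℂ x = 1 := by simp [mul_conj', hx]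
    have hy' : y * starRingEnd ℂ y = 1 := by simp [mul_conj', hy]
    linear_combination (x * y) * hconj - y * hx' - x * hy' - h
  have hq : x ^ 2 + x + 1 = 0 := by linear_combination x * h - hxy
  have hx1 : x ≠ 1 := by rintro rfl; norm_num at hq
  exact IsPrimitiveRoot.iff_orderOf.2 <| orderOf_eq_prime (by linear_combination (x - 1) * hq) hx1

theorem exists_pow_eq_one_isPrimitiveRoot_pow {p a n : ℕ} [hp : Fact p.Prime] (ha : a ≠ 0)
    (h : padicValNat p a < padicValNat p n) : ∃ α : ℂ, α ^ n = 1 ∧ IsPrimitiveRoot (α ^ a) p := by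
  set s := padicValNat p a
  obtain ⟨c, hc⟩ : p ^ s ∣ a := pow_padicValNat_dvd
  have hcp : c.Coprime p := by
    refine Nat.coprime_comm.1 <| (Nat.Prime.coprime_iff_not_dvd hp.out).2 fun hpc ↦ ?_
    exact pow_succ_padicValNat_not_dvd ha <| hc ▸ (pow_succ p s ▸ mul_dvd_mul_left _ hpc)
  have hζ := isPrimitiveRoot_exp (p ^ (s + 1)) (pow_ne_zero _ hp.out.ne_zero)
  refine ⟨_, hζ.pow_eq_one_iff_dvd n |>.2 ((padicValNat_dvd_iff _ n).2 (Or.inr h)), ?_⟩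
  rw [hc, pow_mul]
  exact (hζ.pow (pow_pos hp.out.pos _) (pow_succ p s)).pow_of_coprime c hcp

theorem exists_pow_eq_one_pow_add_pow_add_one_eq_zero_iff {a n : ℕ} (ha : a ≠ 0) (hn : n ≠ 0) :
    (∃ α β : ℂ, α ^ n = 1 ∧ β ^ n = 1 ∧ α ^ a + β ^ a + 1 = 0) ↔
      padicValNat 3 a < padicValNat 3 n := by
  constructor
  · rintro ⟨α, β, hα, hβ, hsum⟩
    have hnorm {γ : ℂ} (hγ : γ ^ n = 1) : ‖γ ^ a‖ = 1 := by
      rw [norm_pow, norm_eq_one_of_pow_eq_one hγ hn, one_pow]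
    exact (isPrimitiveRoot_three_of_add_add_one_eq_zero (hnorm hα) (hnorm hβ) hsum).padicValNat_lt
      hn hα
  · intro h
    obtain ⟨α, hα, hω⟩ := exists_pow_eq_one_isPrimitiveRoot_pow ha h
    refine ⟨α, α ^ 2, hα, by rw [pow_right_comm, hα, one_pow], ?_⟩
    have hgeom := hω.geom_sum_eq_zero (by norm_num)
    simp only [Finset.sum_range_succ, Finset.sum_range_zero] at hgeom
    linear_combination hgeom

end Complex

theorem stmt_1_general (a b : ℕ) (ha : 0 < a) (hab : a ≠ b) :
    (∃ α β : ℂ, α ^ ((b : ℤ) - (a : ℤ)) = 1 ∧ β ^ ((b : ℤ) - (a : ℤ)) = 1 ∧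
      α ^ a + β ^ a + 1 = 0) ↔
      (padicValNat 3 a = padicValNat 3 b ∧
        padicValNat 3 b < padicValInt 3 ((b : ℤ) - (a : ℤ))) := by
  simp only [← pow_natAbs_eq_one', ← padicValInt.of_nat]
  rw [padicValInt_eq_and_lt_sub_iff (by exact_mod_cast ha.ne'), padicValInt.of_nat]
  exact Complex.exists_pow_eq_one_pow_add_pow_add_one_eq_zero_iff ha.ne' (by omega)

theorem stmt_1 (a b : ℕ) (ha : 0 < a) (hb : 0 < b) (hab : a ≠ b) :
    (∃ α β : ℂ, α ^ ((b : ℤ) - (a : ℤ)) = 1 ∧ β ^ ((b : ℤ) - (a : ℤ)) = 1 ∧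
      α ^ a + β ^ a + 1 = 0) ↔
      (padicValNat 3 a = padicValNat 3 b ∧
        padicValNat 3 b < padicValInt 3 ((b : ℤ) - (a : ℤ))) :=
  stmt_1_general a b ha hab
end

section
/- Let a and b be distinct positive integers. There exist complex numbers α, β, γ with α^(b-a) = β^(b-a) = γ^(b-a) = 1 and α^a + β^a + γ^a + 1 = 0 if and only if ν_2(a) = ν_2(b). -/
/-! Roots of unity have modulus one, and for unimodular `x, y, z` conjugating `x + y + z + 1 = 0`
gives `xy + yz + zx + xyz = 0`, so `(x + 1)(y + 1)(z + 1) = 0`. Hence some `ζ` with `ζ ^ (b - a) = 1`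
has `ζ ^ a = -1`, and then also `ζ ^ b = -1`. Since `ζ ^ (2a) = 1 ≠ ζ ^ a`, the order of `ζ` has
2-adic valuation `ν₂(a) + 1`, and likewise `ν₂(b) + 1`. Conversely, if `ν₂(a) = ν₂(b) = v`, a primitive
`2 ^ (v + 1)`-th root of unity `ζ` satisfies `ζ ^ a = ζ ^ b = -1`, and `(1, ζ, ζ)` is a solution. -/

open Complex ComplexConjugate

theorem norm_eq_one_of_zpow_eq_one {K : Type*} [NormedDivisionRing K] {x : K} {k : ℤ}
    (h : x ^ k = 1) (hk : k ≠ 0) : ‖x‖ = 1 := by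
  by_contra hx
  exact hk ((zpow_eq_one_iff_right₀ (norm_nonneg x) hx).1 (by rw [← norm_zpow, h, norm_one]))

theorem zpow_sub_natCast_eq_one_iff {G₀ : Type*} [GroupWithZero G₀] {x : G₀} (hx : x ≠ 0)
    {a b : ℕ} : x ^ ((b : ℤ) - a) = 1 ↔ x ^ b = x ^ a := by
  rw [zpow_sub₀ hx, div_eq_one_iff_eq (zpow_ne_zero _ hx), zpow_natCast, zpow_natCast]

theorem padicValNat_eq_succ_of_dvd_mul_of_not_dvd {p m a : ℕ} [hp : Fact p.Prime]
    (hm : m ∣ p * a) (hma : ¬m ∣ a) : padicValNat p m = padicValNat p a + 1 := by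
  have ha : a ≠ 0 := by rintro rfl; exact hma (dvd_zero m)
  have hpa : p * a ≠ 0 := mul_ne_zero hp.out.ne_zero ha
  have hm0 : m ≠ 0 := ne_zero_of_dvd_ne_zero hpa hm
  have hle := (Nat.factorization_le_iff_dvd hm0 hpa).2 hm
  rw [Nat.factorization_mul hp.out.ne_zero ha, hp.out.factorization] at hle
  have hmp := hle p
  simp only [Finsupp.add_apply, Finsupp.single_eq_same, Nat.factorization_def _ hp.out] at hmp
  refine le_antisymm (by omega) (Nat.succ_le_of_lt (not_le.1 fun hma' => hma ?_))
  -- away from `p`, the exponents of `m` are already bounded by those of `a`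
  refine (Nat.factorization_le_iff_dvd hm0 ha).1 fun q => ?_
  obtain rfl | hqp := eq_or_ne q p
  · simpa only [Nat.factorization_def _ hp.out] using hma'
  · simpa [Finsupp.single_eq_of_ne hqp] using hle q

theorem padicValNat_orderOf_of_pow_mul_eq_one {G : Type*} [Monoid G] {p a : ℕ} [Fact p.Prime]
    {g : G} (h : g ^ (p * a) = 1) (ha : g ^ a ≠ 1) :
    padicValNat p (orderOf g) = padicValNat p a + 1 :=
  padicValNat_eq_succ_of_dvd_mul_of_not_dvd (orderOf_dvd_of_pow_eq_one h)
    (mt orderOf_dvd_iff_pow_eq_one.1 ha)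

theorem padicValNat_two_eq_of_pow_eq_neg_one {R : Type*} [Ring R] (hR : (-1 : R) ≠ 1) {ζ : R}
    {a b : ℕ} (ha : ζ ^ a = -1) (hb : ζ ^ b = -1) : padicValNat 2 a = padicValNat 2 b := by
  have key : ∀ {n : ℕ}, ζ ^ n = -1 → padicValNat 2 (orderOf ζ) = padicValNat 2 n + 1 :=
    fun hn => padicValNat_orderOf_of_pow_mul_eq_one (by rw [mul_comm, pow_mul, hn, neg_one_sq])
      (hn ▸ hR)
  have := (key ha).symm.trans (key hb)
  omega

theorem IsPrimitiveRoot.pow_eq_neg_one_of_padicValNat_two {R : Type*} [CommRing R]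
    [NoZeroDivisors R] {ζ : R} {v a : ℕ} (hζ : IsPrimitiveRoot ζ (2 ^ (v + 1))) (ha : a ≠ 0)
    (hv : padicValNat 2 a = v) : ζ ^ a = -1 := by
  obtain ⟨k, m, hm, rfl⟩ := Nat.exists_eq_two_pow_mul_odd ha
  obtain rfl : k = v := by
    rw [← hv, padicValNat.mul (by positivity) hm.pos.ne', padicValNat.prime_pow,
      padicValNat.eq_zero_of_not_dvd hm.not_two_dvd_nat, add_zero]
  have h2 : IsPrimitiveRoot (ζ ^ 2 ^ k) 2 := by
    simpa [pow_succ] using hζ.pow_of_dvd (p := 2 ^ k) (by positivity) (pow_dvd_pow 2 k.le_succ)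
  rw [pow_mul, h2.eq_neg_one_of_two_right, hm.neg_one_pow]

theorem Complex.add_one_mul_add_one_mul_add_one_eq_zero {x y z : ℂ} (hx : ‖x‖ = 1) (hy : ‖y‖ = 1)
    (hz : ‖z‖ = 1) (h : x + y + z + 1 = 0) : (x + 1) * (y + 1) * (z + 1) = 0 := by
  have hconj : conj x + conj y + conj z + 1 = 0 := by simpa using congrArg conj h
  have unit : ∀ w : ℂ, ‖w‖ = 1 → w * conj w = 1 := fun w hw => by
    rw [mul_conj, normSq_eq_norm_sq, hw]; norm_num
  linear_combination x * y * z * hconj + h - x * y * unit z hz - y * z * unit x hx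
    - z * x * unit y hy

theorem stmt_2 (a b : ℕ) (ha : 0 < a) (hb : 0 < b) (hab : a ≠ b) :
    (∃ α β γ : ℂ, α ^ ((b : ℤ) - (a : ℤ)) = 1 ∧ β ^ ((b : ℤ) - (a : ℤ)) = 1 ∧
      γ ^ ((b : ℤ) - (a : ℤ)) = 1 ∧ α ^ a + β ^ a + γ ^ a + 1 = 0) ↔
      padicValNat 2 a = padicValNat 2 b := by
  constructor
  · rintro ⟨α, β, γ, hα, hβ, hγ, hsum⟩
    have hk : (b : ℤ) - a ≠ 0 := sub_ne_zero.2 (Nat.cast_injective.ne hab.symm)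
    have norm_pow_a {ζ : ℂ} (h : ζ ^ ((b : ℤ) - a) = 1) : ‖ζ ^ a‖ = 1 := by
      rw [norm_pow, norm_eq_one_of_zpow_eq_one h hk, one_pow]
    have of_pow_a {ζ : ℂ} (h : ζ ^ ((b : ℤ) - a) = 1) (hζa : ζ ^ a = -1) :
        padicValNat 2 a = padicValNat 2 b := by
      have hζ : ζ ≠ 0 := norm_ne_zero_iff.1 (by simp [norm_eq_one_of_zpow_eq_one h hk])
      exact padicValNat_two_eq_of_pow_eq_neg_one (by norm_num) hζa
        (((zpow_sub_natCast_eq_one_iff hζ).1 h).trans hζa)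
    have hprod := add_one_mul_add_one_mul_add_one_eq_zero (norm_pow_a hα) (norm_pow_a hβ)
      (norm_pow_a hγ) hsum
    simp only [mul_eq_zero, add_eq_zero_iff_eq_neg] at hprod
    rcases hprod with (h | h) | h
    exacts [of_pow_a hα h, of_pow_a hβ h, of_pow_a hγ h]
  · intro hv
    obtain ⟨ζ, hζ⟩ : ∃ ζ : ℂ, IsPrimitiveRoot ζ (2 ^ (padicValNat 2 a + 1)) :=
      ⟨_, isPrimitiveRoot_exp (2 ^ (padicValNat 2 a + 1)) (by positivity)⟩
    have hζa : ζ ^ a = -1 := hζ.pow_eq_neg_one_of_padicValNat_two ha.ne' rfl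
    have hζb : ζ ^ b = -1 := hζ.pow_eq_neg_one_of_padicValNat_two hb.ne' hv.symm
    have hζ1 : ζ ^ ((b : ℤ) - a) = 1 :=
      (zpow_sub_natCast_eq_one_iff (hζ.ne_zero (pow_ne_zero _ two_ne_zero))).2 (hζb.trans hζa.symm)
    exact ⟨1, ζ, ζ, one_zpow _, hζ1, hζ1, by rw [one_pow, hζa]; ring⟩
end

section
/- If α, β, γ are complex roots of unity satisfying α + β + γ + 1 = 0, then at least one of α, β, γ equals −1. -/
/-!
Roots of unity lie on the unit circle, where `conj z = z⁻¹`. Conjugating `α + β + γ + 1 = 0`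
and clearing denominators gives `αβ + βγ + γα + αβγ = 0`; adding the two relations yields
`(1 + α)(1 + β)(1 + γ) = 0`.
-/

namespace Complex

open ComplexConjugate

theorem mul_add_mul_add_mul_add_mul_mul_eq_zero_of_norm_eq_one {α β γ : ℂ}
    (hα : ‖α‖ = 1) (hβ : ‖β‖ = 1) (hγ : ‖γ‖ = 1) (h : α + β + γ + 1 = 0) :
    α * β + β * γ + γ * α + α * β * γ = 0 := by
  have unit_mul_conj {z : ℂ} (hz : ‖z‖ = 1) : z * conj z = 1 := by
    simp [mul_conj', hz]
  have h_conj : conj α + conj β + conj γ + 1 = 0 := by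
    simpa using congrArg conj h
  linear_combination α * β * γ * h_conj - β * γ * unit_mul_conj hα
    - γ * α * unit_mul_conj hβ - α * β * unit_mul_conj hγ

theorem eq_neg_one_or_of_norm_eq_one_of_add_add_add_one_eq_zero {α β γ : ℂ}
    (hα : ‖α‖ = 1) (hβ : ‖β‖ = 1) (hγ : ‖γ‖ = 1) (h : α + β + γ + 1 = 0) :
    α = -1 ∨ β = -1 ∨ γ = -1 := by
  have h_prod : (α + 1) * (β + 1) * (γ + 1) = 0 := by
    linear_combination h + mul_add_mul_add_mul_add_mul_mul_eq_zero_of_norm_eq_one hα hβ hγ h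
  simp only [mul_eq_zero, add_eq_zero_iff_eq_neg] at h_prod
  tauto

theorem norm_eq_one_of_exists_pow_eq_one {z : ℂ} (hz : ∃ n : ℕ, 0 < n ∧ z ^ n = 1) :
    ‖z‖ = 1 :=
  let ⟨_, hn, hzn⟩ := hz
  norm_eq_one_of_pow_eq_one hzn hn.ne'

end Complex

theorem stmt_4 (α β γ : ℂ) (hα : ∃ n : ℕ, 0 < n ∧ α ^ n = 1)
    (hβ : ∃ n : ℕ, 0 < n ∧ β ^ n = 1) (hγ : ∃ n : ℕ, 0 < n ∧ γ ^ n = 1)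
    (h : α + β + γ + 1 = 0) :
    α = -1 ∨ β = -1 ∨ γ = -1 :=
  Complex.eq_neg_one_or_of_norm_eq_one_of_add_add_add_one_eq_zero
    (Complex.norm_eq_one_of_exists_pow_eq_one hα) (Complex.norm_eq_one_of_exists_pow_eq_one hβ)
    (Complex.norm_eq_one_of_exists_pow_eq_one hγ) h
end

section
/- Let w be a complex number and 0 ≤ δ ≤ 1/10 a real number such that e^{−δ} ≤ |w| ≤ e^{δ} and e^{−δ} ≤ |1 + w| ≤ e^{δ}. Then |w² + w + 1| ≤ 10δ. -/
/-!
With `x = |w|² - 1` and `y = |1 + w|² - 1` one has `|w² + w + 1|² = x² - x y + y²`, and the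
hypotheses put `|w|²` and `|1 + w|²` between `e^{-2δ}` and `e^{2δ}`, so `|x|, |y| ≤ 4δ`.
Hence `|w² + w + 1|² ≤ 3 (4δ)² ≤ (10δ)²`.
-/

open Complex

theorem Complex.normSq_sq_add_self_add_one (w : ℂ) :
    normSq (w ^ 2 + w + 1) =
      (normSq w - 1) ^ 2 - (normSq w - 1) * (normSq (1 + w) - 1) + (normSq (1 + w) - 1) ^ 2 := by
  simp only [normSq_apply, add_re, add_im, one_re, one_im, pow_two, mul_re, mul_im]
  ring

theorem Real.abs_sq_sub_one_le_of_exp_neg_le_of_le_exp {r δ : ℝ} (hδ0 : 0 ≤ δ) (hδ1 : δ ≤ 1 / 2)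
    (hlow : Real.exp (-δ) ≤ r) (hup : r ≤ Real.exp δ) : |r ^ 2 - 1| ≤ 4 * δ := by
  have hsq : ∀ t : ℝ, Real.exp t ^ 2 = Real.exp (2 * t) := fun t => by
    rw [← Real.exp_nat_mul]; norm_num
  have hr_low : Real.exp (-(2 * δ)) ≤ r ^ 2 := by
    simpa [hsq] using pow_le_pow_left₀ (Real.exp_pos _).le hlow 2
  have hr_up : r ^ 2 ≤ Real.exp (2 * δ) := by
    simpa [hsq] using pow_le_pow_left₀ ((Real.exp_pos _).le.trans hlow) hup 2
  have h2δ : |2 * δ| ≤ 1 := by rw [abs_of_nonneg (by linarith)]; linarith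
  have hneg := abs_le.mp (Real.abs_exp_sub_one_le (x := -(2 * δ)) (by rwa [abs_neg]))
  have hpos := abs_le.mp (Real.abs_exp_sub_one_le h2δ)
  rw [abs_neg, abs_of_nonneg (by linarith)] at hneg
  rw [abs_of_nonneg (by linarith)] at hpos
  rw [abs_le]
  constructor <;> linarith [hneg.1, hpos.2]

theorem sq_sub_mul_add_sq_le {x y ε : ℝ} (hx : |x| ≤ ε) (hy : |y| ≤ ε) :
    x ^ 2 - x * y + y ^ 2 ≤ 3 * ε ^ 2 := by
  have hxy : |x * y| ≤ ε ^ 2 := by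
    rw [abs_mul, sq]; exact mul_le_mul hx hy (abs_nonneg _) ((abs_nonneg _).trans hx)
  have hx2 : x ^ 2 ≤ ε ^ 2 := sq_le_sq' (abs_le.mp hx).1 (abs_le.mp hx).2
  have hy2 : y ^ 2 ≤ ε ^ 2 := sq_le_sq' (abs_le.mp hy).1 (abs_le.mp hy).2
  linarith [neg_abs_le (x * y)]

theorem stmt_5 (w : ℂ) (δ : ℝ) (hδ0 : 0 ≤ δ) (hδ1 : δ ≤ 1 / 10)
    (h1 : Real.exp (-δ) ≤ ‖w‖) (h2 : ‖w‖ ≤ Real.exp δ)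
    (h3 : Real.exp (-δ) ≤ ‖1 + w‖) (h4 : ‖1 + w‖ ≤ Real.exp δ) :
    ‖w ^ 2 + w + 1‖ ≤ 10 * δ := by
  have hw := Real.abs_sq_sub_one_le_of_exp_neg_le_of_le_exp hδ0 (by linarith) h1 h2
  have hw1 := Real.abs_sq_sub_one_le_of_exp_neg_le_of_le_exp hδ0 (by linarith) h3 h4
  rw [Complex.sq_norm] at hw hw1
  have key : ‖w ^ 2 + w + 1‖ ^ 2 ≤ (10 * δ) ^ 2 := by
    rw [Complex.sq_norm, normSq_sq_add_self_add_one]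
    nlinarith [sq_sub_mul_add_sq_le hw hw1]
  exact (pow_le_pow_iff_left₀ (norm_nonneg _) (by positivity) two_ne_zero).mp key
end

section
/- Let K be a field of characteristic different from 2, and let a, b be positive integers with d = gcd(a,b). The power sums p_a = x₁^a + x₂^a and p_b = x₁^b + x₂^b form a regular sequence in K[x₁, x₂] if and only if at least one of a/d or b/d is even. -/
/-! In a domain, `x ^ a = -y ^ a` and `x ^ b = -y ^ b` give `x ^ (2 * d) = y ^ (2 * d)` for
`d = gcd a b` (look at `x / y` in the fraction field); if `a / d` is even this yields `x ^ a = y ^ a`,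
hence `2 * y ^ a = 0` and `y = 0`. Applied in `K[x₁, x₂] ⧸ (q)` for a prime `q` dividing both `p_a`
and `p_b`, it forces `q ∣ x₁` and `q ∣ x₂`, which is absurd; so `p_a` and `p_b` are coprime, and in
a UFD a pair `f, g` with `f ≠ 0` and `(f, g) ≠ (1)` is regular exactly when `f` and `g` are coprime.
If `a / d` and `b / d` are both odd, the nonunit `p_d` divides both `p_a` and `p_b`. -/

open RingTheory.Sequence

theorem RingTheory.Sequence.isRegular_pair_iff {R : Type*} [CommRing R] (f g : R) :
    IsRegular R [f, g] ↔
      IsSMulRegular R f ∧ (∀ z : R, f ∣ g * z → f ∣ z) ∧ Ideal.span {f, g} ≠ ⊤ := by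
  have smul_top (I : Ideal R) : I • (⊤ : Submodule R R) = I := by
    rw [smul_eq_mul, Ideal.mul_top]
  have hofList : Ideal.ofList [f, g] = Ideal.span {f, g} := by
    rw [Ideal.ofList_cons, Ideal.ofList_singleton, ← Ideal.span_union, Set.singleton_union]
  have hf : IsSMulRegular (R ⧸ (Ideal.ofList ([f, g].take 0) • ⊤ : Submodule R R)) f ↔
      IsSMulRegular R f := by
    rw [List.take_zero, Ideal.ofList_nil, Submodule.bot_smul]
    exact (Submodule.quotEquivOfEqBot ⊥ rfl).isSMulRegular_congr f
  have hg : IsSMulRegular (R ⧸ (Ideal.ofList ([f, g].take 1) • ⊤ : Submodule R R)) g ↔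
      ∀ z : R, f ∣ g * z → f ∣ z := by
    rw [show [f, g].take 1 = [f] from rfl, Ideal.ofList_singleton, smul_top,
      isSMulRegular_quotient_iff_mem_of_smul_mem]
    simp only [smul_eq_mul, Ideal.mem_span_singleton]
  rw [isRegular_iff, isWeaklyRegular_iff, hofList, smul_top, ne_comm]
  constructor
  · rintro ⟨hw, htop⟩
    exact ⟨hf.mp (hw 0 (by simp)), hg.mp (hw 1 (by simp)), htop⟩
  · rintro ⟨h0, h1, htop⟩
    refine ⟨fun i hi => ?_, htop⟩
    match i, hi with
    | 0, _ => exact hf.mpr h0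
    | 1, _ => exact hg.mpr h1

theorem isRelPrime_of_forall_dvd_mul {R : Type*} [CommMonoidWithZero R] [IsCancelMulZero R]
    {f g : R} (hf : f ≠ 0) (h : ∀ z : R, f ∣ g * z → f ∣ z) : IsRelPrime f g := by
  rintro c ⟨f', rfl⟩ ⟨g', rfl⟩
  obtain ⟨t, ht⟩ := h f' ⟨g', mul_right_comm c g' f'⟩
  refine IsUnit.of_mul_eq_one t (mul_left_cancel₀ (right_ne_zero_of_mul hf) ?_)
  rw [mul_one, mul_left_comm, ← mul_assoc, ← ht]

theorem RingTheory.Sequence.isRegular_pair_iff_isRelPrime {R : Type*} [CommRing R] [IsDomain R]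
    [DecompositionMonoid R] {f g : R} (hf : f ≠ 0) (htop : Ideal.span {f, g} ≠ ⊤) :
    IsRegular R [f, g] ↔ IsRelPrime f g := by
  rw [isRegular_pair_iff]
  exact ⟨fun ⟨_, h, _⟩ => isRelPrime_of_forall_dvd_mul hf h,
    fun h => ⟨IsSMulRegular.of_ne_zero hf, fun _ => h.dvd_of_dvd_mul_left, htop⟩⟩

theorem pow_gcd_eq_pow_gcd {A : Type*} [CommRing A] [IsDomain A] {x y : A} (hy : y ≠ 0)
    {m n : ℕ} (hm : x ^ m = y ^ m) (hn : x ^ n = y ^ n) :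
    x ^ m.gcd n = y ^ m.gcd n := by
  have key (k : ℕ) : (algebraMap A (FractionRing A) x / algebraMap A (FractionRing A) y) ^ k = 1
      ↔ x ^ k = y ^ k := by
    rw [div_pow, div_eq_one_iff_eq (pow_ne_zero _ (by simpa using hy)), ← map_pow, ← map_pow,
      (IsFractionRing.injective A (FractionRing A)).eq_iff]
  exact (key _).mp (pow_gcd_eq_one.mpr ⟨(key m).mpr hm, (key n).mpr hn⟩)

theorem eq_zero_of_pow_add_pow_eq_zero {A : Type*} [CommRing A] [IsDomain A] (h2 : (2 : A) ≠ 0)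
    {x y : A} {a b : ℕ} (hab : Even (a / a.gcd b)) (ha : x ^ a + y ^ a = 0)
    (hb : x ^ b + y ^ b = 0) : y = 0 := by
  by_contra hy
  have hsq {n : ℕ} (hn : x ^ n + y ^ n = 0) : x ^ (2 * n) = y ^ (2 * n) := by
    rw [pow_mul', pow_mul', eq_neg_of_add_eq_zero_left hn, neg_sq]
  have h2d : x ^ (2 * a.gcd b) = y ^ (2 * a.gcd b) := by
    simpa only [Nat.gcd_mul_left] using pow_gcd_eq_pow_gcd hy (hsq ha) (hsq hb)
  obtain ⟨k, hk⟩ := even_iff_two_dvd.mp hab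
  have hxa : x ^ a = y ^ a := by
    rw [← Nat.mul_div_cancel' (a.gcd_dvd_left b), hk, ← mul_assoc, mul_comm _ 2,
      pow_mul x, pow_mul y, h2d]
  have : 2 * y ^ a = 0 := by rw [← ha, hxa, two_mul]
  exact pow_ne_zero a hy ((mul_eq_zero.mp this).resolve_left h2)

theorem isRelPrime_pow_add_pow_of_even {R : Type*} [CommRing R] [IsDomain R]
    [UniqueFactorizationMonoid R] {x y : R} (hxy : IsRelPrime x y) (h2 : IsUnit (2 : R))
    {a b : ℕ} (hab : Even (a / a.gcd b)) (ha : x ^ a + y ^ a ≠ 0) :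
    IsRelPrime (x ^ a + y ^ a) (x ^ b + y ^ b) := by
  refine (UniqueFactorizationMonoid.isRelPrime_iff_no_prime_factors ha).mpr fun q hqa hqb hq => ?_
  have := (Ideal.span_singleton_prime hq.ne_zero).mpr hq
  let π := Ideal.Quotient.mk (Ideal.span {q})
  have h2q : (2 : R ⧸ Ideal.span {q}) ≠ 0 := by
    simpa only [map_ofNat] using (h2.map π).ne_zero
  have hπa : π x ^ a + π y ^ a = 0 := by
    simpa only [map_add, map_pow] using (Ideal.Quotient.eq_zero_iff_dvd q _).mpr hqa
  have hπb : π x ^ b + π y ^ b = 0 := by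
    simpa only [map_add, map_pow] using (Ideal.Quotient.eq_zero_iff_dvd q _).mpr hqb
  have hqy : q ∣ y := (Ideal.Quotient.eq_zero_iff_dvd q y).mp
    (eq_zero_of_pow_add_pow_eq_zero h2q hab hπa hπb)
  have hqx : q ∣ x := (Ideal.Quotient.eq_zero_iff_dvd q x).mp
    (eq_zero_of_pow_add_pow_eq_zero h2q hab (by rwa [add_comm]) (by rwa [add_comm]))
  exact hq.not_isUnit (hxy hqx hqy)

theorem pow_add_pow_dvd_pow_add_pow_of_odd {R : Type*} [CommRing R] (x y : R) {d n : ℕ}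
    (hdn : d ∣ n) (hodd : Odd (n / d)) : x ^ d + y ^ d ∣ x ^ n + y ^ n := by
  simpa only [← pow_mul, Nat.mul_div_cancel' hdn] using hodd.add_dvd_pow_add_pow (x ^ d) (y ^ d)

theorem not_isRelPrime_pow_add_pow_of_odd {R : Type*} [CommRing R] {x y : R} {a b : ℕ}
    (hgcd : ¬IsUnit (x ^ a.gcd b + y ^ a.gcd b)) (ha : Odd (a / a.gcd b))
    (hb : Odd (b / a.gcd b)) : ¬IsRelPrime (x ^ a + y ^ a) (x ^ b + y ^ b) := fun h =>
  hgcd (h (pow_add_pow_dvd_pow_add_pow_of_odd x y (a.gcd_dvd_left b) ha)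
    (pow_add_pow_dvd_pow_add_pow_of_odd x y (a.gcd_dvd_right b) hb))

namespace MvPolynomial

theorem isRelPrime_X_X {σ R : Type*} [CommRing R] [IsDomain R] {i j : σ} (hij : i ≠ j) :
    IsRelPrime (X i : MvPolynomial σ R) (X j) :=
  X_prime.irreducible.isRelPrime_iff_not_dvd.mpr (by simpa [X_dvd_X] using hij)

variable {R : Type*} [CommSemiring R]

theorem X_zero_pow_add_X_one_pow_ne_zero (h2 : (2 : R) ≠ 0) (n : ℕ) :
    (X 0 ^ n + X 1 ^ n : MvPolynomial (Fin 2) R) ≠ 0 := fun h => by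
  simpa [one_add_one_eq_two, h2] using congrArg (eval fun _ => (1 : R)) h

theorem X_zero_pow_add_X_one_pow_mem_ker_constantCoeff {n : ℕ} (hn : n ≠ 0) :
    (X 0 ^ n + X 1 ^ n : MvPolynomial (Fin 2) R) ∈ RingHom.ker constantCoeff := by
  simp [hn]

variable [Nontrivial R]

theorem not_isUnit_X_zero_pow_add_X_one_pow {n : ℕ} (hn : n ≠ 0) :
    ¬IsUnit (X 0 ^ n + X 1 ^ n : MvPolynomial (Fin 2) R) := fun h =>
  (RingHom.ker_ne_top _) (Ideal.eq_top_of_isUnit_mem _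
    (X_zero_pow_add_X_one_pow_mem_ker_constantCoeff hn) h)

theorem span_X_zero_pow_add_X_one_pow_ne_top {a b : ℕ} (ha : a ≠ 0) (hb : b ≠ 0) :
    Ideal.span {(X 0 ^ a + X 1 ^ a : MvPolynomial (Fin 2) R), X 0 ^ b + X 1 ^ b} ≠ ⊤ :=
  ne_top_of_le_ne_top (RingHom.ker_ne_top constantCoeff) <| Ideal.span_le.mpr <|
    Set.insert_subset_iff.mpr ⟨X_zero_pow_add_X_one_pow_mem_ker_constantCoeff ha,
      Set.singleton_subset_iff.mpr (X_zero_pow_add_X_one_pow_mem_ker_constantCoeff hb)⟩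

end MvPolynomial

open MvPolynomial in
theorem stmt_7 (K : Type*) [Field K] (hchar : (2 : K) ≠ 0)
    (a b : ℕ) (ha : 0 < a) (hb : 0 < b) (d : ℕ) (hd : d = Nat.gcd a b) :
    RingTheory.Sequence.IsRegular (MvPolynomial (Fin 2) K)
      [(X 0 ^ a + X 1 ^ a : MvPolynomial (Fin 2) K), X 0 ^ b + X 1 ^ b] ↔
      (Even (a / d) ∨ Even (b / d)) := by
  subst hd
  have h2 : IsUnit (2 : MvPolynomial (Fin 2) K) := by
    simpa only [map_ofNat] using (Ne.isUnit hchar).map (C : K →+* MvPolynomial (Fin 2) K)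
  rw [isRegular_pair_iff_isRelPrime (X_zero_pow_add_X_one_pow_ne_zero hchar a)
    (span_X_zero_pow_add_X_one_pow_ne_top ha.ne' hb.ne')]
  constructor
  · intro hrel
    by_contra! hodd
    exact not_isRelPrime_pow_add_pow_of_odd
      (not_isUnit_X_zero_pow_add_X_one_pow (Nat.gcd_pos_of_pos_left b ha).ne')
      (Nat.not_even_iff_odd.mp hodd.1) (Nat.not_even_iff_odd.mp hodd.2) hrel
  · rintro (heven | heven)
    · exact isRelPrime_pow_add_pow_of_even (isRelPrime_X_X zero_ne_one) h2 heven
        (X_zero_pow_add_X_one_pow_ne_zero hchar a)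
    · refine (isRelPrime_pow_add_pow_of_even (isRelPrime_X_X zero_ne_one) h2 ?_
        (X_zero_pow_add_X_one_pow_ne_zero hchar b)).symm
      rwa [Nat.gcd_comm]
end

section
/- Let K be a field and let a₁, ..., aₙ be positive integers with d = gcd(a₁, ..., aₙ). The power sums p_{a₁}, ..., p_{aₙ} form a regular sequence in K[x₁, ..., xₙ] if and only if p_{a₁/d}, ..., p_{aₙ/d} form a regular sequence. -/
/-!
Since `d` divides every `aᵢ`, `p_{aᵢ} = expand d (p_{aᵢ/d})`, where `expand d` substitutes
`Xⱼ ↦ Xⱼ ^ d`. Through `expand d` the polynomial ring becomes a free module over itself with basis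
the monomials whose exponents are all `< d`, and a sequence is regular on a nonzero finite free
module iff it is regular on the ring, because `M ↦ M / rM` commutes with finite products.
-/

open Submodule Pointwise

namespace RingTheory.Sequence

variable {R M : Type*} [CommRing R] [AddCommGroup M] [Module R M]

lemma isRegular_nil_iff : IsRegular M ([] : List R) ↔ Nontrivial M := by
  refine ⟨fun h => ?_, fun _ => IsRegular.nil R M⟩
  rw [← not_subsingleton_iff_nontrivial]
  intro
  exact h.top_ne_smul (Subsingleton.elim _ _)

lemma smul_top_pi (ι : Type*) (r : R) :
    (r • ⊤ : Submodule R (ι → M)) = Submodule.pi Set.univ fun _ => r • ⊤ := by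
  ext x
  simp only [mem_smul_pointwise_iff_exists, mem_top, true_and, mem_pi, Set.mem_univ,
    forall_const]
  refine ⟨fun ⟨y, hy⟩ i => ⟨y i, congrFun hy i⟩, fun h => ?_⟩
  choose y hy using h
  exact ⟨y, funext hy⟩

noncomputable def quotSMulTopPiEquiv (ι : Type*) [Fintype ι] [DecidableEq ι] (r : R) :
    QuotSMulTop r (ι → M) ≃ₗ[R] (ι → QuotSMulTop r M) :=
  (quotEquivOfEq _ _ (smul_top_pi ι r)).trans (quotientPi _)

lemma isRegular_pi_iff {ι : Type*} [Finite ι] [Nonempty ι] (rs : List R) :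
    IsRegular (ι → M) rs ↔ IsRegular M rs := by
  classical
  have := Fintype.ofFinite ι
  induction rs generalizing M with
  | nil =>
    rw [isRegular_nil_iff, isRegular_nil_iff, ← not_subsingleton_iff_nontrivial,
      ← not_subsingleton_iff_nontrivial, not_iff_not]
    exact ⟨fun _ => (Function.const_injective (α := ι) (β := M)).subsingleton,
      fun _ => inferInstance⟩
  | cons r rs ih =>
    rw [isRegular_cons_iff, isRegular_cons_iff, Pi.isSMulRegular_iff, forall_const,
      (quotSMulTopPiEquiv ι r).isRegular_congr]
    exact and_congr_right fun _ => ih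

lemma isRegular_iff_of_basis {ι : Type*} [Finite ι] [Nonempty ι] (b : Module.Basis ι R M)
    (rs : List R) : IsRegular M rs ↔ IsRegular R rs :=
  (b.equivFun.isRegular_congr rs).trans (isRegular_pi_iff rs)

end RingTheory.Sequence

namespace MvPolynomial

variable (σ R : Type*) [CommRing R]

/-- `MvPolynomial σ R` as an algebra over `MvPolynomial σ R` via `expand d`, where `d` is the
last argument. -/
def ExpandAlgebra (_ : ℕ) : Type _ := MvPolynomial σ R

variable (d : ℕ)

noncomputable section

instance : CommRing (ExpandAlgebra σ R d) := inferInstanceAs (CommRing (MvPolynomial σ R))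

instance : Algebra R (ExpandAlgebra σ R d) := inferInstanceAs (Algebra R (MvPolynomial σ R))

instance : Algebra (MvPolynomial σ R) (ExpandAlgebra σ R d) :=
  (expand d : MvPolynomial σ R →ₐ[R] MvPolynomial σ R).toRingHom.toAlgebra

instance : IsScalarTower R (MvPolynomial σ R) (ExpandAlgebra σ R d) :=
  .of_algebraMap_eq fun r => (expand_C d r).symm

variable {σ d}

def monomialDivModEquiv [Finite σ] [NeZero d] : (Σ _ : σ → Fin d, σ →₀ ℕ) ≃ (σ →₀ ℕ) where
  toFun x := d • x.2 + Finsupp.equivFunOnFinite.symm fun i => (x.1 i : ℕ)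
  invFun m :=
    ⟨fun i => ⟨m i % d, Nat.mod_lt _ (NeZero.pos d)⟩, Finsupp.equivFunOnFinite.symm (m · / d)⟩
  left_inv := by
    rintro ⟨e, q⟩
    ext i
    · simp [Nat.mod_eq_of_lt (e i).isLt]
    · refine heq_of_eq (Finsupp.ext fun i => ?_)
      simp [Nat.mul_add_div (NeZero.pos d), Nat.div_eq_of_lt (e i).isLt]
  right_inv m := by
    ext i
    simp [Nat.div_add_mod]

variable (σ d) [Fintype σ] [DecidableEq σ] [NeZero d]

def expandCombination :
    ((σ → Fin d) → MvPolynomial σ R) →ₗ[MvPolynomial σ R] ExpandAlgebra σ R d :=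
  Fintype.linearCombination (MvPolynomial σ R) (M := ExpandAlgebra σ R d) fun e =>
    monomial (Finsupp.equivFunOnFinite.symm fun i => (e i : ℕ)) 1

lemma expandCombination_single_monomial (e : σ → Fin d) (q : σ →₀ ℕ) :
    expandCombination σ R d (Pi.single e (monomial q 1)) =
      (monomial (monomialDivModEquiv ⟨e, q⟩) 1 : MvPolynomial σ R) := by
  refine (Fintype.linearCombination_apply_single _ _ _ _).trans ?_
  show (expand d (monomial q 1) * monomial _ 1 : MvPolynomial σ R) = monomial _ 1
  rw [expand_monomial, monomial_mul, one_mul]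
  rfl

lemma bijective_expandCombination : Function.Bijective (expandCombination σ R d) := by
  let b := Pi.basis fun _ : σ → Fin d => basisMonomials σ R
  let b' : Module.Basis (σ →₀ ℕ) R (ExpandAlgebra σ R d) := basisMonomials σ R
  have : (expandCombination σ R d).restrictScalars R = b.equiv b' monomialDivModEquiv :=
    b.ext fun ⟨e, q⟩ => by
      rw [LinearEquiv.coe_coe, Module.Basis.equiv_apply, LinearMap.restrictScalars_apply,
        show b ⟨e, q⟩ = Pi.single e (monomial q 1) by simp [b]]
      exact expandCombination_single_monomial σ R d e q
  rw [← LinearMap.coe_restrictScalars R, this]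
  exact (b.equiv b' monomialDivModEquiv).bijective

def expandBasis : Module.Basis (σ → Fin d) (MvPolynomial σ R) (ExpandAlgebra σ R d) :=
  .ofEquivFun (LinearEquiv.ofBijective _ (bijective_expandCombination σ R d)).symm

end

open RingTheory.Sequence in
theorem isRegular_map_expand_iff [Finite σ] [NeZero d] (rs : List (MvPolynomial σ R)) :
    IsRegular (MvPolynomial σ R) (rs.map (expand d)) ↔ IsRegular (MvPolynomial σ R) rs := by
  classical
  have := Fintype.ofFinite σ
  calc IsRegular (MvPolynomial σ R) (rs.map (expand d))
      ↔ IsRegular (ExpandAlgebra σ R d) rs :=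
        (AddEquiv.isRegular_congr (M := ExpandAlgebra σ R d)
          (e := AddEquiv.refl (MvPolynomial σ R)) (bs := rs.map (expand d))
          (List.forall₂_map_right_iff.mpr (List.forall₂_same.mpr fun _ _ _ => rfl))).symm
    _ ↔ IsRegular (MvPolynomial σ R) rs := isRegular_iff_of_basis (expandBasis σ R d) rs

end MvPolynomial

open MvPolynomial in
theorem stmt_8_general (K : Type*) [Field K] (n : ℕ) (a : Fin n → ℕ)
    (d : ℕ) (hd : d = Finset.univ.gcd a) :
    RingTheory.Sequence.IsRegular (MvPolynomial (Fin n) K)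
      (List.ofFn fun i => (∑ j : Fin n, X j ^ a i : MvPolynomial (Fin n) K)) ↔
    RingTheory.Sequence.IsRegular (MvPolynomial (Fin n) K)
      (List.ofFn fun i => (∑ j : Fin n, X j ^ (a i / d) : MvPolynomial (Fin n) K)) := by
  rcases eq_or_ne d 0 with rfl | hd0
  · have ha : ∀ i, a i = 0 := fun i => Finset.gcd_eq_zero_iff.mp hd.symm i (Finset.mem_univ i)
    simp [ha]
  · have : NeZero d := ⟨hd0⟩
    have hdvd (i : Fin n) : d ∣ a i := hd ▸ Finset.gcd_dvd (Finset.mem_univ i)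
    have hexpand : (List.ofFn fun i => (∑ j : Fin n, X j ^ a i : MvPolynomial (Fin n) K)) =
        (List.ofFn fun i => ∑ j : Fin n, X j ^ (a i / d)).map (expand d) := by
      simp [List.map_ofFn, Function.comp_def, ← pow_mul, Nat.mul_div_cancel' (hdvd _)]
    rw [hexpand, isRegular_map_expand_iff]

open MvPolynomial in
theorem stmt_8 (K : Type*) [Field K] (n : ℕ) (a : Fin n → ℕ) (ha : ∀ i, 0 < a i)
    (d : ℕ) (hd : d = Finset.univ.gcd a) :
    RingTheory.Sequence.IsRegular (MvPolynomial (Fin n) K)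
      (List.ofFn fun i => (∑ j : Fin n, X j ^ a i : MvPolynomial (Fin n) K)) ↔
    RingTheory.Sequence.IsRegular (MvPolynomial (Fin n) K)
      (List.ofFn fun i => (∑ j : Fin n, X j ^ (a i / d) : MvPolynomial (Fin n) K)) :=
  stmt_8_general K n a d hd
end

section
/- In the polynomial ring S = ℂ[x₁, x₂, x₃, x₄], the power sum p₅ = x₁⁵ + x₂⁵ + x₃⁵ + x₄⁵ lies in the ideal generated by p₁ = x₁ + x₂ + x₃ + x₄ and p₂ = x₁² + x₂² + x₃² + x₄². -/
/-!
Newton's identity for `k = 5` in at most four variables, where `e₅ = 0`, reads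
`p₅ = e₁ p₄ - e₂ p₃ + e₃ p₂ - e₄ p₁`. Here `e₁ = p₁` and, once `2` is invertible,
`e₂ = (e₁ p₁ - p₂) / 2` also lies in `(p₁, p₂)`, so every term does.
-/

namespace MvPolynomial

open Finset

variable {σ R : Type*} [Fintype σ] [CommRing R]

theorem esymm_eq_zero_of_card_lt {n : ℕ} (h : Fintype.card σ < n) : esymm σ R n = 0 := by
  rw [esymm, powersetCard_eq_empty.mpr (by simpa using h), sum_empty]

variable (σ R)

theorem two_mul_esymm_two : 2 * esymm σ R 2 = esymm σ R 1 * psum σ R 1 - psum σ R 2 := by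
  rw [psum_eq_mul_esymm_sub_sum σ R 2 two_pos]
  simp only [sum_filter, Nat.sum_antidiagonal_succ, HasAntidiagonal.antidiagonal_zero,
    sum_singleton, Set.mem_Ioo, Nat.reduceAdd, Nat.reduceLT, and_self, and_true, and_false,
    if_true, if_false]
  ring

theorem psum_five :
    psum σ R 5 = 5 * esymm σ R 5 + esymm σ R 1 * psum σ R 4 - esymm σ R 2 * psum σ R 3
      + esymm σ R 3 * psum σ R 2 - esymm σ R 4 * psum σ R 1 := by
  rw [psum_eq_mul_esymm_sub_sum σ R 5 (by norm_num)]
  simp only [sum_filter, Nat.sum_antidiagonal_succ, HasAntidiagonal.antidiagonal_zero,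
    sum_singleton, Set.mem_Ioo, Nat.reduceAdd, Nat.reduceLT, and_self, and_true, and_false,
    if_true, if_false]
  ring

variable {σ R}

theorem psum_five_mem_span_psum_one_psum_two (hσ : Fintype.card σ ≤ 4) (h2 : IsUnit (2 : R)) :
    psum σ R 5 ∈ Ideal.span {psum σ R 1, psum σ R 2} := by
  set I := Ideal.span {psum σ R 1, psum σ R 2}
  have hp₁ : psum σ R 1 ∈ I := Ideal.subset_span (Set.mem_insert _ _)
  have hp₂ : psum σ R 2 ∈ I := Ideal.subset_span (Set.mem_insert_of_mem _ rfl)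
  have he₁ : esymm σ R 1 ∈ I := by rwa [esymm_one, ← psum_one]
  have he₂ : esymm σ R 2 ∈ I := by
    have h2' : IsUnit (2 : MvPolynomial σ R) := by
      simpa only [map_ofNat] using h2.map (C : R →+* MvPolynomial σ R)
    rw [← Ideal.unit_mul_mem_iff_mem I h2', two_mul_esymm_two]
    exact I.sub_mem (I.mul_mem_right _ he₁) hp₂
  rw [psum_five, esymm_eq_zero_of_card_lt (by omega), mul_zero, zero_add]
  exact I.sub_mem (I.add_mem (I.sub_mem (I.mul_mem_right _ he₁) (I.mul_mem_right _ he₂))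
    (I.mul_mem_left _ hp₂)) (I.mul_mem_left _ hp₁)

end MvPolynomial

open MvPolynomial in
theorem stmt_9 :
    (∑ j : Fin 4, X j ^ 5 : MvPolynomial (Fin 4) ℂ) ∈
      Ideal.span {(∑ j : Fin 4, X j ^ 1 : MvPolynomial (Fin 4) ℂ), ∑ j : Fin 4, X j ^ 2} :=
  psum_five_mem_span_psum_one_psum_two (Fintype.card_fin 4).le two_ne_zero.isUnit
end

section
/- If n ≡ 1 (mod 6), then z(z+1)(z²+z+1)² divides the polynomial 1 + z^n + (−1−z)^n in ℚ[z]. -/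
/-! Write `e = z² + z + 1`. Since `z³ = 1 + (z - 1) e` and `(z - 1) e` squares to zero modulo `e²`,
`z^(3m+1) ≡ z - m (2z + 1) e`. The substitution `z ↦ -1 - z` fixes `e` and negates `2z + 1`, so for
`n ≡ 1 (mod 3)` the two error terms cancel and `1 + z^n + (-1 - z)^n ≡ 1 + z + (-1 - z) = 0 (mod e²)`.
For odd `n` the polynomial also vanishes at `0` and `-1`, and `z (z + 1)` is coprime to `e`. -/

open Polynomial

section CommRing

variable {R : Type*} [CommRing R]

theorem one_add_pow_of_sq_eq_zero {y : R} (hy : y ^ 2 = 0) (m : ℕ) : (1 + y) ^ m = 1 + m * y := by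
  simpa [derivative_X_pow] using eval_add_of_sq_eq_zero (X ^ m) 1 y hy

theorem pow_three_mul_add_one_of_sq_eq_zero {x : R} (he : (x ^ 2 + x + 1) ^ 2 = 0) (m : ℕ) :
    x ^ (3 * m + 1) = x - m * (2 * x + 1) * (x ^ 2 + x + 1) := by
  have hcube : x ^ 3 = 1 + (x - 1) * (x ^ 2 + x + 1) := by ring
  have hsq : ((x - 1) * (x ^ 2 + x + 1)) ^ 2 = 0 := by rw [mul_pow, he, mul_zero]
  rw [pow_succ, pow_mul, hcube, one_add_pow_of_sq_eq_zero hsq]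
  linear_combination (m : R) * he

theorem one_add_pow_add_neg_one_sub_pow_eq_zero {x : R} (he : (x ^ 2 + x + 1) ^ 2 = 0) {n : ℕ}
    (hn : n % 3 = 1) : 1 + x ^ n + (-1 - x) ^ n = 0 := by
  obtain ⟨m, rfl⟩ : ∃ m, n = 3 * m + 1 := ⟨n / 3, by omega⟩
  have he' : ((-1 - x) ^ 2 + (-1 - x) + 1) ^ 2 = 0 := by rw [← he]; ring
  rw [pow_three_mul_add_one_of_sq_eq_zero he, pow_three_mul_add_one_of_sq_eq_zero he']
  ring

theorem sq_X_sq_add_X_add_one_dvd {n : ℕ} (hn : n % 3 = 1) :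
    ((X ^ 2 + X + 1) ^ 2 : R[X]) ∣ 1 + X ^ n + (-1 - X) ^ n := by
  rw [← AdjoinRoot.mk_eq_zero]
  have he := AdjoinRoot.mk_self (f := ((X ^ 2 + X + 1) ^ 2 : R[X]))
  simp only [map_add, map_sub, map_neg, map_pow, map_one, AdjoinRoot.mk_X] at he ⊢
  exact one_add_pow_add_neg_one_sub_pow_eq_zero he hn

theorem X_mul_X_add_one_dvd {n : ℕ} (hn : Odd n) :
    (X * (X + 1) : R[X]) ∣ 1 + X ^ n + (-1 - X) ^ n := by
  have hroot (a : R) (ha : 1 + a ^ n + (-1 - a) ^ n = 0) : X - C a ∣ 1 + X ^ n + (-1 - X) ^ n := by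
    rw [dvd_iff_isRoot]
    simpa using ha
  have hX := hroot 0 (by simp [hn.neg_one_pow, hn.pos.ne'])
  have hX1 := hroot (-1) (by simp [hn.neg_one_pow, hn.pos.ne'])
  rw [map_zero, sub_zero] at hX
  rw [map_neg, map_one, sub_neg_eq_add] at hX1
  exact IsCoprime.mul_dvd ⟨-1, 1, by ring⟩ hX hX1

theorem X_mul_X_add_one_mul_sq_dvd {n : ℕ} (hodd : Odd n) (hn : n % 3 = 1) :
    (X * (X + 1) * (X ^ 2 + X + 1) ^ 2 : R[X]) ∣ 1 + X ^ n + (-1 - X) ^ n :=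
  IsCoprime.mul_dvd (IsCoprime.pow_right ⟨-1, 1, by ring⟩) (X_mul_X_add_one_dvd hodd)
    (sq_X_sq_add_X_add_one_dvd hn)

end CommRing

open Polynomial in
theorem stmt_13_general (n : ℕ) (h : n % 6 = 1) :
    (X * (X + 1) * (X ^ 2 + X + 1) ^ 2 : ℚ[X]) ∣ (1 + X ^ n + (-1 - X) ^ n) :=
  X_mul_X_add_one_mul_sq_dvd (Nat.odd_iff.mpr (by omega)) (by omega)

open Polynomial in
theorem stmt_13 (n : ℕ) (hn : 0 < n) (h : n % 6 = 1) :
    (X * (X + 1) * (X ^ 2 + X + 1) ^ 2 : ℚ[X]) ∣ (1 + X ^ n + (-1 - X) ^ n) :=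
  stmt_13_general n h
end
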